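/- Let p, q ≥ 2 with p + q = n. Every biholomorphic automorphism of D^{p,q} = {(z,w) ∈ ℂᵖ × ℂ^q : |z|² - |w|² > 0} extends to a biholomorphic automorphism of ℂⁿ, and similarly every automorphism of C^{p,q} = {(z,w) : |z|² - |w|² < 0} extends to an automorphism of ℂⁿ; the restriction maps give mutually inverse group isomorphisms Aut(D^{p,q}) ≅ Aut(C^{p,q}). -/

import Mathlib

/-!
Single out the coordinate ζ = z₁. Then D^{p,q} = {β < |ζ|²} with β = |w|² - |z₂|² - ⋯ - |z_p|²
independent of ζ, so every complex line in the ζ-direction meets D^{p,q} in the exterior of a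
disc, and in the whole line where β < 0 (such points exist because p ≥ 2). For h holomorphic on
D^{p,q} the Cauchy integral (2πi)⁻¹ ∮_{|ζ|=R} h(ζ, ·) / (ζ - ζ₀) dζ over a large circle is
holomorphic in all variables (differentiation under the integral, with the Lipschitz bound from
the Schwarz lemma), does not depend on R by Cauchy's theorem on annuli, and equals h wherever
β < 0; by the identity theorem on the connected domain D^{p,q} it extends h to ℂⁿ.

The extensions F, G of an automorphism f and its inverse g satisfy G ∘ F = id on D^{p,q}, hence
everywhere, so F is an automorphism of ℂⁿ mapping D^{p,q} into itself. Then F preserves the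
complement of the closure of D^{p,q}, which is C^{p,q}. Finally C^{p,q} is D^{q,p} with the two
factors swapped.
-/

/-- The domain D^{p,q} = {(z,w) : |z|² - |w|² > 0} ⊂ ℂᵖ × ℂ^q. -/
def Dpq (p q : ℕ) : Set ((Fin p → ℂ) × (Fin q → ℂ)) :=
  {z | ∑ i : Fin q, ‖z.2 i‖ ^ 2 < ∑ i : Fin p, ‖z.1 i‖ ^ 2}

/-- The domain C^{p,q} = {(z,w) : |z|² - |w|² < 0} ⊂ ℂᵖ × ℂ^q. -/
def Cpq (p q : ℕ) : Set ((Fin p → ℂ) × (Fin q → ℂ)) :=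
  {z | ∑ i : Fin p, ‖z.1 i‖ ^ 2 < ∑ i : Fin q, ‖z.2 i‖ ^ 2}

open Set Metric Filter Complex Topology MeasureTheory Real

section IdentityTheorem

variable {E F : Type*} [NormedAddCommGroup E] [NormedSpace ℂ E] [NormedAddCommGroup F]
  [NormedSpace ℂ F] [CompleteSpace F] {f g : E → F} {U : Set E}

theorem DifferentiableOn.eqOn_of_convex_of_eventuallyEq (hf : DifferentiableOn ℂ f U)
    (hg : DifferentiableOn ℂ g U) (hU : IsOpen U) (hUc : Convex ℝ U) {y : E} (hy : y ∈ U)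
    (hfg : f =ᶠ[𝓝 y] g) : EqOn f g U := by
  intro z hz
  let L : ℂ → E := fun t => y + t • (z - y)
  have hL : Differentiable ℂ L := by fun_prop
  have hS : IsOpen (L ⁻¹' U) := hU.preimage hL.continuous
  have hSc : Convex ℝ (L ⁻¹' U) :=
    (hUc.translate_preimage_right y).is_linear_preimage
      ((LinearMap.toSpanSingleton ℂ E (z - y)).restrictScalars ℝ).isLinear
  have hfL : AnalyticOnNhd ℂ (f ∘ L) (L ⁻¹' U) :=
    (hf.comp hL.differentiableOn (mapsTo_preimage L U)).analyticOnNhd hS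
  have hgL : AnalyticOnNhd ℂ (g ∘ L) (L ⁻¹' U) :=
    (hg.comp hL.differentiableOn (mapsTo_preimage L U)).analyticOnNhd hS
  have hL0 : Tendsto L (𝓝 0) (𝓝 y) := by
    simpa [L] using hL.continuous.tendsto 0
  have key := hfL.eqOn_of_preconnected_of_eventuallyEq hgL hSc.isPreconnected
    (z₀ := 0) (by simpa [L] using hy) (hL0.eventually hfg)
  simpa [L] using key (show (1 : ℂ) ∈ L ⁻¹' U by simpa [L] using hz)

theorem DifferentiableOn.eqOn_of_isPreconnected_of_eventuallyEq (hf : DifferentiableOn ℂ f U)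
    (hg : DifferentiableOn ℂ g U) (hU : IsOpen U) (hUc : IsPreconnected U) {y : E} (hy : y ∈ U)
    (hfg : f =ᶠ[𝓝 y] g) : EqOn f g U := by
  let S := {x | f =ᶠ[𝓝 x] g}
  suffices U ⊆ S from fun x hx => (this hx).self_of_nhds
  refine hUc.subset_of_closure_inter_subset isOpen_setOfPred_eventually_nhds ⟨y, hy, hfg⟩ ?_
  rintro x ⟨hxS, hxU⟩
  obtain ⟨r, hr, hrU⟩ := Metric.isOpen_iff.1 hU x hxU
  obtain ⟨y', hy'S, hy'⟩ := Metric.mem_closure_iff.1 hxS r hr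
  have hball := (hf.mono hrU).eqOn_of_convex_of_eventuallyEq (hg.mono hrU) isOpen_ball
    (convex_ball x r) (mem_ball'.2 hy') hy'S
  exact eventually_of_mem (ball_mem_nhds x hr) hball

end IdentityTheorem

section CircleIntegral

variable {E F : Type*} [NormedAddCommGroup E] [NormedSpace ℂ E] [NormedAddCommGroup F]
  [NormedSpace ℂ F] {φ : E × ℂ → F} {O : Set (E × ℂ)} {x₀ : E} {c : ℂ} {R : ℝ}

theorem exists_ball_dist_le_mul_dist_of_differentiableOn [ProperSpace E]
    (hφ : DifferentiableOn ℂ φ O) (hO : IsOpen O) (hx₀ : ∀ ζ ∈ sphere c R, (x₀, ζ) ∈ O) :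
    ∃ δ > 0, ∃ C, ∀ ζ ∈ sphere c R, ∀ x ∈ ball x₀ δ,
      (x, ζ) ∈ O ∧ dist (φ (x, ζ)) (φ (x₀, ζ)) ≤ C * dist x x₀ := by
  have hT : IsCompact ({x₀} ×ˢ sphere c R) := isCompact_singleton.prod (isCompact_sphere c R)
  obtain ⟨δ, hδ, hδO⟩ := hT.exists_thickening_subset_open hO
    (by rintro ⟨x, ζ⟩ ⟨rfl, hζ⟩; exact hx₀ ζ hζ)
  have hmem : ∀ ζ ∈ sphere c R, ∀ x, dist x x₀ < δ → (x, ζ) ∈ O := fun ζ hζ x hx =>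
    hδO (mem_thickening_iff.2 ⟨(x₀, ζ), ⟨rfl, hζ⟩, by simpa [Prod.dist_eq] using hx⟩)
  have hK : closedBall x₀ (δ / 2) ×ˢ sphere c R ⊆ O := by
    rintro ⟨x, ζ⟩ ⟨hx, hζ⟩
    exact hmem ζ hζ x (by rw [mem_closedBall] at hx; linarith)
  obtain ⟨M, hM⟩ := ((isCompact_closedBall x₀ (δ / 2)).prod
    (isCompact_sphere c R)).exists_bound_of_continuousOn (hφ.continuousOn.mono hK)
  have hball : ∀ ζ ∈ sphere c R, MapsTo (fun x => (x, ζ)) (ball x₀ (δ / 2)) O :=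
    fun ζ hζ x hx => hK ⟨ball_subset_closedBall hx, hζ⟩
  refine ⟨δ / 2, by positivity, 2 * M / (δ / 2), fun ζ hζ x hx => ⟨hball ζ hζ hx, ?_⟩⟩
  refine Complex.dist_le_div_mul_dist_of_mapsTo_ball (f := fun x => φ (x, ζ))
    (hφ.comp (by fun_prop) (hball ζ hζ)) (fun x' hx' => ?_) hx
  rw [mem_closedBall, two_mul]
  exact (dist_le_norm_add_norm _ _).trans (add_le_add (hM _ ⟨ball_subset_closedBall hx', hζ⟩)
    (hM _ ⟨mem_closedBall_self (by positivity), hζ⟩))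

variable [FiniteDimensional ℂ E] [FiniteDimensional ℂ F]

theorem differentiableAt_circleIntegral_of_differentiableOn (hφ : DifferentiableOn ℂ φ O)
    (hO : IsOpen O) (hR : 0 ≤ R) (hx₀ : ∀ ζ ∈ sphere c R, (x₀, ζ) ∈ O) :
    DifferentiableAt ℂ (fun x => ∮ ζ in C(c, R), φ (x, ζ)) x₀ := by
  obtain ⟨δ, hδ, C, hC⟩ := exists_ball_dist_le_mul_dist_of_differentiableOn hφ hO hx₀
  have hγ : ∀ θ, circleMap c R θ ∈ sphere c R := circleMap_mem_sphere c hR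
  have hcont : ∀ x ∈ ball x₀ δ,
      Continuous fun θ => deriv (circleMap c R) θ • φ (x, circleMap c R θ) := by
    intro x hx
    simp only [deriv_circleMap]
    exact ((continuous_circleMap 0 R).mul continuous_const).smul
      (hφ.continuousOn.comp_continuous (by fun_prop) fun θ => (hC _ (hγ θ) x hx).1)
  let inl := ContinuousLinearMap.inl ℂ E ℂ
  let F' : ℝ → E →L[ℂ] F := fun θ =>
    deriv (circleMap c R) θ • (fderiv ℂ φ (x₀, circleMap c R θ)).comp inl
  borelize (E × ℂ)
  have hF'_meas : Measurable F' := by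
    simp only [F', deriv_circleMap]
    exact ((continuous_circleMap 0 R).mul continuous_const).measurable.smul
      (((ContinuousLinearMap.compL ℂ E (E × ℂ) F).flip inl).continuous.measurable.comp
        ((measurable_fderiv ℂ φ).comp (by fun_prop)))
  have hderiv := hasFDerivAt_integral_of_dominated_loc_of_lip' (F' := F')
    (μ := volume.restrict (Ioc 0 (2 * π))) (bound := fun _ => |R| * C)
    (ball_mem_nhds x₀ hδ) (fun x hx => (hcont x hx).aestronglyMeasurable)
    ((hcont x₀ (mem_ball_self hδ)).integrableOn_Ioc) hF'_meas.aestronglyMeasurable ?_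
    (integrable_const _) ?_
  · simpa only [circleIntegral, intervalIntegral.integral_of_le Real.two_pi_pos.le]
      using hderiv.2.differentiableAt
  · refine ae_of_all _ fun θ x hx => ?_
    rw [← smul_sub, norm_smul, deriv_circleMap, norm_mul, norm_circleMap_zero, norm_I, mul_one,
      mul_assoc, ← dist_eq_norm, ← dist_eq_norm]
    exact mul_le_mul_of_nonneg_left (hC _ (hγ θ) x hx).2 (abs_nonneg R)
  · refine ae_of_all _ fun θ => ?_
    have hmem := (hC _ (hγ θ) x₀ (mem_ball_self hδ)).1
    exact ((hφ.differentiableAt (hO.mem_nhds hmem)).hasFDerivAt.comp x₀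
      ((hasFDerivAt_id x₀).prodMk (hasFDerivAt_const _ x₀))).const_smul _

end CircleIntegral

section Hartogs

variable {X F : Type*} [NormedAddCommGroup X] [NormedSpace ℂ X] [NormedAddCommGroup F]
  [NormedSpace ℂ F]

/- `ℓ` is a coordinate, `e` a vector with `ℓ e = 1`, and `β` is invariant under translation by
`ℂ e`, so `x + (ζ - ℓ x) • e` is the point with `ℓ`-coordinate `ζ` on the line `x + ℂ e`, and that
line meets `hartogsDomain ℓ β` in `{|ζ|² > β x}`. -/
def hartogsDomain (ℓ : X →L[ℂ] ℂ) (β : X → ℝ) : Set X := {x | β x < ‖ℓ x‖ ^ 2}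

noncomputable def cauchyAlong (ℓ : X →L[ℂ] ℂ) (e : X) (h : X → F) (R : ℝ) (x : X) : F :=
  (2 * π * I)⁻¹ • ∮ ζ in C(0, R), (ζ - ℓ x)⁻¹ • h (x + (ζ - ℓ x) • e)

-- Any radius `R` with `‖ℓ x‖ < R` and `β x < R ^ 2` gives the same value (`cauchyAlong_eq_of_le`).
noncomputable def hartogsExt (ℓ : X →L[ℂ] ℂ) (e : X) (β : X → ℝ) (h : X → F) (x : X) : F :=
  cauchyAlong ℓ e h (‖ℓ x‖ + |β x| + 1) x

variable {ℓ : X →L[ℂ] ℂ} {e : X} {β : X → ℝ} {h : X → F}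

theorem add_smul_mem_hartogsDomain_iff (hℓe : ℓ e = 1) (hβe : ∀ x (t : ℂ), β (x + t • e) = β x)
    (x : X) (ζ : ℂ) : x + (ζ - ℓ x) • e ∈ hartogsDomain ℓ β ↔ β x < ‖ζ‖ ^ 2 := by
  simp [hartogsDomain, hβe, hℓe]

theorem isOpen_hartogsDomain (hβ : Continuous β) : IsOpen (hartogsDomain ℓ β) :=
  isOpen_lt hβ (by fun_prop)

theorem cauchyAlong_eq_of_le (hℓe : ℓ e = 1) (hβ : Continuous β)
    (hβe : ∀ x (t : ℂ), β (x + t • e) = β x) (hh : DifferentiableOn ℂ h (hartogsDomain ℓ β))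
    {R R' : ℝ} {x : X} (hxR : ‖ℓ x‖ < R) (hβx : β x < R ^ 2) (hRR' : R ≤ R') :
    cauchyAlong ℓ e h R' x = cauchyAlong ℓ e h R x := by
  have hd : ∀ ζ : ℂ, R ≤ ‖ζ‖ →
      DifferentiableAt ℂ (fun ζ => (ζ - ℓ x)⁻¹ • h (x + (ζ - ℓ x) • e)) ζ := by
    intro ζ hζ
    have hR : 0 ≤ R := (norm_nonneg _).trans hxR.le
    have hmem : x + (ζ - ℓ x) • e ∈ hartogsDomain ℓ β :=
      (add_smul_mem_hartogsDomain_iff hℓe hβe x ζ).2 (hβx.trans_le (by gcongr))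
    exact ((differentiableAt_id.sub_const _).inv (sub_ne_zero.2 (by rintro rfl; linarith))).smul
      ((hh.differentiableAt ((isOpen_hartogsDomain hβ).mem_nhds hmem)).comp ζ (by fun_prop))
  rw [cauchyAlong, cauchyAlong, circleIntegral_eq_of_differentiable_on_annulus_off_countable
    ((norm_nonneg _).trans_lt hxR) hRR' countable_empty]
  · exact fun ζ hζ => (hd ζ (by simpa using hζ.2)).continuousAt.continuousWithinAt
  · intro ζ hζ
    have hζR := hζ.1.2
    rw [mem_closedBall_zero_iff, not_le] at hζR
    exact hd ζ hζR.le

theorem cauchyAlong_eq_self [CompleteSpace F] (hℓe : ℓ e = 1) (hβ : Continuous β)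
    (hβe : ∀ x (t : ℂ), β (x + t • e) = β x) (hh : DifferentiableOn ℂ h (hartogsDomain ℓ β))
    {R : ℝ} {x : X} (hxR : ‖ℓ x‖ < R) (hβx : β x < 0) :
    cauchyAlong ℓ e h R x = h x := by
  have hd : Differentiable ℂ fun ζ => h (x + (ζ - ℓ x) • e) := fun ζ =>
    have hmem : x + (ζ - ℓ x) • e ∈ hartogsDomain ℓ β :=
      (add_smul_mem_hartogsDomain_iff hℓe hβe x ζ).2 (hβx.trans_le (by positivity))
    (hh.differentiableAt ((isOpen_hartogsDomain hβ).mem_nhds hmem)).comp ζ (by fun_prop)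
  rw [cauchyAlong, hd.diffContOnCl.circleIntegral_sub_inv_smul (by simpa using hxR), smul_smul,
    inv_mul_cancel₀ two_pi_I_ne_zero, one_smul, sub_self, zero_smul, add_zero]

variable [FiniteDimensional ℂ X] [FiniteDimensional ℂ F]

theorem differentiableOn_cauchyAlong (hℓe : ℓ e = 1) (hβ : Continuous β)
    (hβe : ∀ x (t : ℂ), β (x + t • e) = β x) (hh : DifferentiableOn ℂ h (hartogsDomain ℓ β))
    (R : ℝ) : DifferentiableOn ℂ (cauchyAlong ℓ e h R) {x | ‖ℓ x‖ < R ∧ β x < R ^ 2} := by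
  let O : Set (X × ℂ) := {v | v.2 ≠ ℓ v.1 ∧ β v.1 < ‖v.2‖ ^ 2}
  have hO : IsOpen O := (isOpen_ne_fun (by fun_prop) (by fun_prop)).inter
    (isOpen_lt (hβ.comp continuous_fst) (by fun_prop))
  have hφ : DifferentiableOn ℂ
      (fun v : X × ℂ => (v.2 - ℓ v.1)⁻¹ • h (v.1 + (v.2 - ℓ v.1) • e)) O := by
    rintro ⟨x, ζ⟩ ⟨hne, hβx⟩
    have hmem := (add_smul_mem_hartogsDomain_iff hℓe hβe x ζ).2 hβx
    refine DifferentiableAt.differentiableWithinAt ?_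
    exact ((differentiableAt_snd.sub (ℓ.differentiableAt.comp _ differentiableAt_fst)).inv
      (sub_ne_zero.2 hne)).smul
      ((hh.differentiableAt ((isOpen_hartogsDomain hβ).mem_nhds hmem)).comp (x, ζ) (by fun_prop))
  rintro x ⟨hxR, hβx⟩
  refine (DifferentiableAt.const_smul ?_ _).differentiableWithinAt
  refine differentiableAt_circleIntegral_of_differentiableOn hφ hO ((norm_nonneg _).trans hxR.le) ?_
  intro ζ hζ
  rw [mem_sphere_zero_iff_norm] at hζ
  exact ⟨fun h' => hxR.ne (h' ▸ hζ), by rwa [hζ]⟩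

theorem differentiable_hartogsExt (hℓe : ℓ e = 1) (hβ : Continuous β)
    (hβe : ∀ x (t : ℂ), β (x + t • e) = β x) (hh : DifferentiableOn ℂ h (hartogsDomain ℓ β)) :
    Differentiable ℂ (hartogsExt ℓ e β h) := by
  let ρ : X → ℝ := fun x => ‖ℓ x‖ + |β x| + 1
  have hℓρ : ∀ x, ‖ℓ x‖ < ρ x := fun x => by simp only [ρ]; linarith [abs_nonneg (β x)]
  have hβρ : ∀ x, β x < ρ x ^ 2 := fun x => by
    simp only [ρ]; nlinarith [le_abs_self (β x), abs_nonneg (β x), norm_nonneg (ℓ x)]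
  intro x₀
  set R := ρ x₀ + 1
  have hU : IsOpen {x | ‖ℓ x‖ < R ∧ β x < R ^ 2} :=
    (isOpen_lt ℓ.continuous.norm continuous_const).inter (isOpen_lt hβ continuous_const)
  have hx₀ : x₀ ∈ {x | ‖ℓ x‖ < R ∧ β x < R ^ 2} :=
    ⟨(hℓρ x₀).trans (lt_add_one _),
      (hβρ x₀).trans (by gcongr; linarith [norm_nonneg (ℓ x₀), hℓρ x₀])⟩
  refine ((differentiableOn_cauchyAlong hℓe hβ hβe hh R).differentiableAt
    (hU.mem_nhds hx₀)).congr_of_eventuallyEq ?_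
  have hρc : Continuous ρ := by fun_prop
  filter_upwards [(isOpen_lt hρc continuous_const).mem_nhds (lt_add_one (ρ x₀))] with x hx
  exact (cauchyAlong_eq_of_le hℓe hβ hβe hh (hℓρ x) (hβρ x) hx.le).symm

theorem exists_differentiable_eqOn_hartogsDomain (hℓe : ℓ e = 1) (hβ : Continuous β)
    (hβe : ∀ x (t : ℂ), β (x + t • e) = β x) (hconn : IsPreconnected (hartogsDomain ℓ β))
    (hneg : ∃ x, β x < 0) (hh : DifferentiableOn ℂ h (hartogsDomain ℓ β)) :
    ∃ H : X → F, Differentiable ℂ H ∧ EqOn H h (hartogsDomain ℓ β) := by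
  have hext := differentiable_hartogsExt hℓe hβ hβe hh
  refine ⟨hartogsExt ℓ e β h, hext, ?_⟩
  obtain ⟨y, hy⟩ := hneg
  refine hext.differentiableOn.eqOn_of_isPreconnected_of_eventuallyEq hh
    (isOpen_hartogsDomain hβ) hconn (hy.trans_le (by positivity)) ?_
  filter_upwards [(isOpen_lt hβ continuous_const).mem_nhds hy] with x hx
  exact cauchyAlong_eq_self hℓe hβ hβe hh (by linarith [abs_nonneg (β x)]) hx

end Hartogs

theorem mapsTo_compl_closure_of_leftInverse {X : Type*} [TopologicalSpace X] {U : Set X}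
    {A B : X → X} (hB : Continuous B) (hBA : Function.LeftInverse B A) (hBU : MapsTo B U U) :
    MapsTo A (closure U)ᶜ (closure U)ᶜ := fun x hx hAx =>
  hx (hBA x ▸ map_mem_closure hB hAx hBU)

section Extension

variable {X : Type*} [NormedAddCommGroup X] [NormedSpace ℂ X] [CompleteSpace X] {U : Set X}

theorem Differentiable.comp_eq_id_of_eqOn {A B : X → X} (hA : Differentiable ℂ A)
    (hB : Differentiable ℂ B) (hU : IsOpen U) (hne : U.Nonempty) (hBA : EqOn (B ∘ A) id U) :
    B ∘ A = id := by
  obtain ⟨y, hy⟩ := hne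
  funext x
  exact (hB.comp hA).differentiableOn.eqOn_of_isPreconnected_of_eventuallyEq
    differentiable_id.differentiableOn isOpen_univ isPreconnected_univ (mem_univ y)
    (eventually_of_mem (hU.mem_nhds hy) hBA) (mem_univ x)

theorem exists_differentiable_extension_of_invOn (hU : IsOpen U) (hne : U.Nonempty)
    (hext : ∀ h : X → X, DifferentiableOn ℂ h U → ∃ H, Differentiable ℂ H ∧ EqOn H h U)
    {f g : X → X} (hf : DifferentiableOn ℂ f U) (hg : DifferentiableOn ℂ g U)
    (hfm : MapsTo f U U) (hgm : MapsTo g U U) (hinv : InvOn g f U U) :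
    ∃ F G : X → X, Differentiable ℂ F ∧ Differentiable ℂ G ∧ EqOn F f U ∧ G ∘ F = id ∧
      F ∘ G = id ∧ MapsTo F (closure U)ᶜ (closure U)ᶜ ∧ MapsTo G (closure U)ᶜ (closure U)ᶜ := by
  obtain ⟨F, hF, hFf⟩ := hext f hf
  obtain ⟨G, hG, hGg⟩ := hext g hg
  have hGF : G ∘ F = id := hF.comp_eq_id_of_eqOn hG hU hne fun x hx => by
    simp [hFf hx, hGg (hfm hx), hinv.1 hx]
  have hFG : F ∘ G = id := hG.comp_eq_id_of_eqOn hF hU hne fun x hx => by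
    simp [hGg hx, hFf (hgm hx), hinv.2 hx]
  have hFU : MapsTo F U U := fun x hx => hFf hx ▸ hfm hx
  have hGU : MapsTo G U U := fun x hx => hGg hx ▸ hgm hx
  exact ⟨F, G, hF, hG, hFf, hGF, hFG,
    mapsTo_compl_closure_of_leftInverse hG.continuous (congrFun hGF) hGU,
    mapsTo_compl_closure_of_leftInverse hF.continuous (congrFun hFG) hFU⟩

end Extension

theorem sum_norm_sq_smul {ι : Type*} [Fintype ι] (c : ℝ) (v : ι → ℂ) :
    ∑ i, ‖(c • v) i‖ ^ 2 = c ^ 2 * ∑ i, ‖v i‖ ^ 2 := by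
  simp [Finset.mul_sum, mul_pow]

theorem sum_norm_sq_pos {ι : Type*} [Fintype ι] {v : ι → ℂ} (hv : v ≠ 0) :
    0 < ∑ i, ‖v i‖ ^ 2 := by
  obtain ⟨i, hi⟩ := Function.ne_iff.1 hv
  exact Finset.sum_pos' (fun j _ => by positivity) ⟨i, Finset.mem_univ i, by positivity⟩

section Domains

variable {p q : ℕ}

theorem isOpen_Dpq : IsOpen (Dpq p q) := isOpen_lt (by fun_prop) (by fun_prop)

theorem isOpen_Cpq : IsOpen (Cpq p q) := isOpen_lt (by fun_prop) (by fun_prop)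

theorem fst_ne_zero_of_mem_Dpq {x : (Fin p → ℂ) × (Fin q → ℂ)} (hx : x ∈ Dpq p q) : x.1 ≠ 0 := by
  rintro h0
  have : ∑ j, ‖x.2 j‖ ^ 2 < 0 := by simpa [Dpq, h0] using hx
  exact this.not_ge (by positivity)

theorem mk_zero_mem_Dpq {z : Fin p → ℂ} (hz : z ≠ 0) : (z, (0 : Fin q → ℂ)) ∈ Dpq p q := by
  simpa [Dpq] using sum_norm_sq_pos hz

theorem Dpq_nonempty (hp : 0 < p) : (Dpq p q).Nonempty :=
  ⟨_, mk_zero_mem_Dpq (z := fun _ => 1) (Function.ne_iff.2 ⟨⟨0, hp⟩, one_ne_zero⟩)⟩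

theorem Cpq_nonempty (hq : 0 < q) : (Cpq p q).Nonempty :=
  let ⟨x, hx⟩ := Dpq_nonempty (q := p) hq
  ⟨x.swap, hx⟩

theorem isPreconnected_Dpq (hp : 2 ≤ p) : IsPreconnected (Dpq p q) := by
  have hrank : 1 < Module.rank ℝ (Fin p → ℂ) := by
    rw [← Module.finrank_eq_rank, Module.finrank_pi_fintype]
    simp only [Complex.finrank_real_complex, Finset.sum_const, Finset.card_univ, Fintype.card_fin,
      smul_eq_mul]
    norm_cast
    omega
  have hZ := isPathConnected_compl_singleton_of_one_lt_rank hrank 0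
  obtain ⟨z₀, hz₀⟩ := hZ.nonempty
  refine (IsPathConnected.isConnected
    ⟨(z₀, 0), mk_zero_mem_Dpq hz₀, fun {x} hx => ?_⟩).isPreconnected
  have hsegment : segment ℝ (x.1, 0) x ⊆ Dpq p q := by
    rw [segment_eq_image]
    rintro _ ⟨t, ⟨ht0, ht1⟩, rfl⟩
    have hpt : (1 - t) • ((x.1, 0) : (Fin p → ℂ) × (Fin q → ℂ)) + t • x = (x.1, t • x.2) := by
      ext <;> simp; ring
    have hsw : ∑ j, ‖(t • x.2) j‖ ^ 2 ≤ ∑ j, ‖x.2 j‖ ^ 2 := by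
      rw [sum_norm_sq_smul]
      exact mul_le_of_le_one_left (by positivity) (by nlinarith)
    dsimp only
    rw [hpt]
    exact hsw.trans_lt hx
  have hx1 := fst_ne_zero_of_mem_Dpq hx
  refine ((hZ.joinedIn z₀ hz₀ x.1 hx1).map (f := fun z => (z, (0 : Fin q → ℂ))) (by fun_prop)).mono
    ?_ |>.trans (JoinedIn.of_segment_subset hsegment)
  rintro _ ⟨z, hz, rfl⟩
  exact mk_zero_mem_Dpq hz

theorem exists_lt_sum_norm_sq_add_smul (hp : 0 < p) (z : Fin p → ℂ) :
    ∃ u : Fin p → ℂ, ∀ t : ℝ, 0 < t → ∑ i, ‖z i‖ ^ 2 < ∑ i, ‖(z + t • u) i‖ ^ 2 := by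
  by_cases hz : z = 0
  · exact ⟨fun _ => 1, fun t ht => by simp [hz, hp, ht]⟩
  · refine ⟨z, fun t ht => ?_⟩
    have hS := sum_norm_sq_pos hz
    rw [show z + t • z = (1 + t) • z by module, sum_norm_sq_smul]
    nlinarith [mul_pos ht hS, mul_pos (mul_pos ht ht) hS]

theorem closure_Dpq (hp : 0 < p) : closure (Dpq p q) = (Cpq p q)ᶜ := by
  refine (closure_minimal (t := (Cpq p q)ᶜ) (fun _ hx hxC => lt_asymm (α := ℝ) hx hxC)
    isOpen_Cpq.isClosed_compl).antisymm fun x hx => ?_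
  have hx' : ∑ j, ‖x.2 j‖ ^ 2 ≤ ∑ i, ‖x.1 i‖ ^ 2 := not_lt.1 hx
  obtain ⟨u, hu⟩ := exists_lt_sum_norm_sq_add_smul hp x.1
  have hcont : Continuous fun t : ℝ => (x.1 + t • u, x.2) := by fun_prop
  have hlim : Tendsto (fun t : ℝ => (x.1 + t • u, x.2)) (𝓝[>] 0) (𝓝 x) :=
    tendsto_nhdsWithin_of_tendsto_nhds (by simpa using hcont.tendsto 0)
  exact mem_closure_of_tendsto hlim
    (eventually_nhdsWithin_of_forall fun t ht => hx'.trans_lt (hu t ht))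

theorem closure_Cpq (hq : 0 < q) : closure (Cpq p q) = (Dpq p q)ᶜ := by
  have := (Homeomorph.prodComm (Fin p → ℂ) (Fin q → ℂ)).preimage_closure (Dpq q p)
  rw [closure_Dpq hq] at this
  exact this.symm

theorem exists_differentiable_eqOn_Dpq {F : Type*} [NormedAddCommGroup F] [NormedSpace ℂ F]
    [FiniteDimensional ℂ F] (hp : 2 ≤ p) {h : (Fin p → ℂ) × (Fin q → ℂ) → F}
    (hh : DifferentiableOn ℂ h (Dpq p q)) :
    ∃ H, Differentiable ℂ H ∧ EqOn H h (Dpq p q) := by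
  have : NeZero p := ⟨by omega⟩
  let ℓ : (Fin p → ℂ) × (Fin q → ℂ) →L[ℂ] ℂ :=
    (ContinuousLinearMap.proj 0).comp (ContinuousLinearMap.fst ℂ _ _)
  let e : (Fin p → ℂ) × (Fin q → ℂ) := (Pi.single 0 1, 0)
  let β : (Fin p → ℂ) × (Fin q → ℂ) → ℝ := fun x =>
    ∑ j, ‖x.2 j‖ ^ 2 - ∑ i ∈ Finset.univ.erase 0, ‖x.1 i‖ ^ 2
  have hD : Dpq p q = hartogsDomain ℓ β := by
    ext x
    show (_ : ℝ) < _ ↔ (_ : ℝ) < _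
    rw [← Finset.add_sum_erase _ _ (Finset.mem_univ (0 : Fin p))]
    simp only [β, ℓ, ContinuousLinearMap.coe_comp, ContinuousLinearMap.coe_fst',
      Function.comp_apply, ContinuousLinearMap.proj_apply]
    constructor <;> intro <;> linarith
  have hβe : ∀ x (t : ℂ), β (x + t • e) = β x := by
    intro x t
    refine congrArg₂ (· - ·) (by simp [e]) (Finset.sum_congr rfl fun i hi => ?_)
    simp [e, Finset.ne_of_mem_erase hi]
  have hneg : β ((fun _ => 1), 0) < 0 := by
    simp [β]
    omega
  rw [hD] at hh ⊢
  exact exists_differentiable_eqOn_hartogsDomain (by simp [ℓ, e]) (by fun_prop) hβe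
    (hD ▸ isPreconnected_Dpq hp) ⟨_, hneg⟩ hh

theorem exists_differentiable_eqOn_Cpq {F : Type*} [NormedAddCommGroup F] [NormedSpace ℂ F]
    [FiniteDimensional ℂ F] (hq : 2 ≤ q) {h : (Fin p → ℂ) × (Fin q → ℂ) → F}
    (hh : DifferentiableOn ℂ h (Cpq p q)) :
    ∃ H, Differentiable ℂ H ∧ EqOn H h (Cpq p q) := by
  have hswap {m n : ℕ} : Differentiable ℂ (Prod.swap : (Fin m → ℂ) × (Fin n → ℂ) → _) :=
    differentiable_snd.prodMk differentiable_fst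
  obtain ⟨H, hH, hHh⟩ := exists_differentiable_eqOn_Dpq hq
    (hh.comp hswap.differentiableOn fun x hx => (hx : x.swap ∈ Cpq p q))
  exact ⟨H ∘ Prod.swap, hH.comp hswap, fun x hx => hHh (x := x.swap) hx⟩

end Domains

/-- For p, q ≥ 2, every automorphism of D^{p,q} (resp. C^{p,q}) extends to an
automorphism of ℂⁿ which restricts to an automorphism of the complementary
domain; the restriction maps give mutually inverse isomorphisms
Aut(D^{p,q}) ≅ Aut(C^{p,q}). -/
theorem stmt_17 (p q : ℕ) (hp : 2 ≤ p) (hq : 2 ≤ q) :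
    (∀ f g : (Fin p → ℂ) × (Fin q → ℂ) → (Fin p → ℂ) × (Fin q → ℂ),
      DifferentiableOn ℂ f (Dpq p q) → DifferentiableOn ℂ g (Dpq p q) →
      Set.MapsTo f (Dpq p q) (Dpq p q) → Set.MapsTo g (Dpq p q) (Dpq p q) →
      Set.InvOn g f (Dpq p q) (Dpq p q) →
      ∃ F G : (Fin p → ℂ) × (Fin q → ℂ) → (Fin p → ℂ) × (Fin q → ℂ),
        Differentiable ℂ F ∧ Differentiable ℂ G ∧ Set.EqOn F f (Dpq p q) ∧
          G ∘ F = id ∧ F ∘ G = id ∧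
          Set.MapsTo F (Cpq p q) (Cpq p q) ∧ Set.MapsTo G (Cpq p q) (Cpq p q)) ∧
    (∀ f g : (Fin p → ℂ) × (Fin q → ℂ) → (Fin p → ℂ) × (Fin q → ℂ),
      DifferentiableOn ℂ f (Cpq p q) → DifferentiableOn ℂ g (Cpq p q) →
      Set.MapsTo f (Cpq p q) (Cpq p q) → Set.MapsTo g (Cpq p q) (Cpq p q) →
      Set.InvOn g f (Cpq p q) (Cpq p q) →
      ∃ F G : (Fin p → ℂ) × (Fin q → ℂ) → (Fin p → ℂ) × (Fin q → ℂ),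
        Differentiable ℂ F ∧ Differentiable ℂ G ∧ Set.EqOn F f (Cpq p q) ∧
          G ∘ F = id ∧ F ∘ G = id ∧
          Set.MapsTo F (Dpq p q) (Dpq p q) ∧ Set.MapsTo G (Dpq p q) (Dpq p q)) := by
  have hp0 : 0 < p := by omega
  have hq0 : 0 < q := by omega
  constructor
  · intro f g hf hg hfm hgm hinv
    simpa only [closure_Dpq hp0, compl_compl] using
      exists_differentiable_extension_of_invOn isOpen_Dpq (Dpq_nonempty hp0)
        (fun _ => exists_differentiable_eqOn_Dpq hp) hf hg hfm hgm hinv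
  · intro f g hf hg hfm hgm hinv
    simpa only [closure_Cpq hq0, compl_compl] using
      exists_differentiable_extension_of_invOn isOpen_Cpq (Cpq_nonempty hq0)
        (fun _ => exists_differentiable_eqOn_Cpq hq) hf hg hfm hgm hinv
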